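/- With notation as in the Birkhoff decomposition: if φ₋ is defined recursively by φ₋(x) = −T[φ(x) + ∑ φ₋(x')φ(x'')] and φ₊ := φ₋ * φ (convolution product), then φ₊(x) = φ(x) + φ₋(x) + ∑ φ₋(x')φ(x'') for all x of positive degree, and in particular (id − T) applied to the bracket gives φ₊, so φ₊(x) lies in the kernel of T. -/
import Mathlib


open TensorProduct

/-- Convolution product of linear maps from a coalgebra to an algebra. -/
noncomputable def conv {R H K : Type*} [CommRing R] [AddCommGroup H] [Module R H]
    [Coalgebra R H] [CommRing K] [Algebra R K] (φ ψ : H →ₗ[R] K) : H →ₗ[R] K :=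
  (LinearMap.mul' R K) ∘ₗ (TensorProduct.map φ ψ) ∘ₗ Coalgebra.comul

/-- Birkhoff decomposition, positive part: with `φ₋(x) = −T[φ(x) + ∑ φ₋(x')φ(x'')]`
(sum over the reduced coproduct) and `φ₊ := φ₋ * φ` the convolution product, one has
`φ₊(x) = φ(x) + φ₋(x) + ∑ φ₋(x')φ(x'')` for every homogeneous `x` of positive degree;
since `φ₊(x)` is `(id − T)` of the bracket, `φ₊(x)` lies in the kernel of `T`. -/
theorem birkhoff_positive_part {H K : Type*} [CommRing H] [HopfAlgebra ℚ H]
    (ℬ : ℕ → Submodule ℚ H) [GradedAlgebra ℬ]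
    (hconn : ℬ 0 = Submodule.span ℚ {(1 : H)})
    [CommRing K] [Algebra ℚ K] (T : K →ₗ[ℚ] K)
    (hTidem : ∀ a : K, T (T a) = T a)
    (φ : H →ₗ[ℚ] K) (hφ1 : φ 1 = 1) (φm : H →ₗ[ℚ] K) (hφm1 : φm 1 = 1)
    (hrec : ∀ n : ℕ, 0 < n → ∀ x ∈ ℬ n,
      φm x = -T (φ x +
        (LinearMap.mul' ℚ K ∘ₗ TensorProduct.map φm φ)
          (Coalgebra.comul (R := ℚ) x - x ⊗ₜ[ℚ] 1 - 1 ⊗ₜ[ℚ] x))) :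
    ∀ n : ℕ, 0 < n → ∀ x ∈ ℬ n,
      conv φm φ x = φ x + φm x +
        (LinearMap.mul' ℚ K ∘ₗ TensorProduct.map φm φ)
          (Coalgebra.comul (R := ℚ) x - x ⊗ₜ[ℚ] 1 - 1 ⊗ₜ[ℚ] x) ∧
      T (conv φm φ x) = 0 := by
  intro n hn x hx
  set f : H ⊗[ℚ] H →ₗ[ℚ] K := LinearMap.mul' ℚ K ∘ₗ TensorProduct.map φm φ with hf
  have hfx1 : f (x ⊗ₜ[ℚ] 1) = φm x := by
    simp [hf, hφ1]
  have hf1x : f ((1 : H) ⊗ₜ[ℚ] x) = φ x := by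
    simp [hf, hφm1]
  have hconv : conv φm φ x = φ x + φm x +
      f (Coalgebra.comul (R := ℚ) x - x ⊗ₜ[ℚ] 1 - 1 ⊗ₜ[ℚ] x) := by
    have : Coalgebra.comul (R := ℚ) x =
        (Coalgebra.comul (R := ℚ) x - x ⊗ₜ[ℚ] 1 - 1 ⊗ₜ[ℚ] x) + x ⊗ₜ[ℚ] 1 + 1 ⊗ₜ[ℚ] x := by
      abel
    have hc : conv φm φ x = f (Coalgebra.comul (R := ℚ) x) := rfl
    rw [hc, this, map_add, map_add, hfx1, hf1x]
    ring
  refine ⟨hconv, ?_⟩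
  have hm := hrec n hn x hx
  set b : K := φ x + f (Coalgebra.comul (R := ℚ) x - x ⊗ₜ[ℚ] 1 - 1 ⊗ₜ[ℚ] x) with hb
  have hTm : T (φm x) = φm x := by
    rw [hm, map_neg, hTidem]
  have : conv φm φ x = b + φm x := by rw [hconv, hb]; ring
  rw [this, map_add, hTm, hm]
  ring
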